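/- arXiv:2312.02825 — 3 statements merged into one kernel-verified Lean document; each statement's English description precedes it below -/
import Mathlib

section
/- The Gonzalez discrete gradient is consistent: for f twice continuously differentiable and z = (x+y)/2, D̄f(x,y) = Df(z) + O(‖y−x‖) as y → x; more precisely, there exist constants C, δ > 0 such that ‖D̄f(x,y) − Df((x+y)/2)‖ ≤ C‖y−x‖ whenever 0 < ‖y−x‖ < δ. -/
open scoped RealInnerProductSpace

/-- The Gonzalez discrete gradient
`D̄f(x,y) = Df(z) + [(f(y) - f(x) - Df(z)·(y-x)) / ‖y-x‖²] (y-x)`, `z = (x+y)/2`. -/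
noncomputable def gonzalezDiscreteGradient {m : ℕ}
    (f : EuclideanSpace ℝ (Fin m) → ℝ) (x y : EuclideanSpace ℝ (Fin m)) :
    EuclideanSpace ℝ (Fin m) :=
  gradient f ((1/2 : ℝ) • (x + y)) +
    ((f y - f x - ⟪gradient f ((1/2 : ℝ) • (x + y)), y - x⟫) / ‖y - x‖ ^ 2) • (y - x)

/-!
The correction term of `D̄f(x,y)` has norm `|f y - f x - Df(z)(y - x)| / ‖y - x‖`. Since `Df` is
`C¹`, it is `K`-Lipschitz near `x`, and on the ball of radius `‖y - x‖ / 2` around the midpoint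
`z` it stays within `K ‖y - x‖ / 2` of `Df(z)`. The mean value inequality on that ball bounds the
numerator by `K ‖y - x‖² / 2`.
-/

open Metric NNReal

section MeanValue

variable {E F : Type*} [NormedAddCommGroup E] [NormedSpace ℝ E]
  [NormedAddCommGroup F] [NormedSpace ℝ F]

theorem closedBall_midpoint_subset_closedBall_left (x y : E) :
    closedBall (midpoint ℝ x y) (‖y - x‖ / 2) ⊆ closedBall x ‖y - x‖ := by
  intro u hu
  rw [mem_closedBall] at hu ⊢
  have hmid : dist (midpoint ℝ x y) x = ‖y - x‖ / 2 := by
    rw [dist_midpoint_left, Real.norm_two, dist_eq_norm, norm_sub_rev, inv_mul_eq_div]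
  linarith [dist_triangle u (midpoint ℝ x y) x]

theorem norm_sub_sub_fderiv_midpoint_le {f : E → F} {K : ℝ≥0} {x y : E}
    (hf : ∀ u ∈ closedBall (midpoint ℝ x y) (‖y - x‖ / 2), DifferentiableAt ℝ f u)
    (hK : LipschitzOnWith K (fderiv ℝ f) (closedBall (midpoint ℝ x y) (‖y - x‖ / 2))) :
    ‖f y - f x - fderiv ℝ f (midpoint ℝ x y) (y - x)‖ ≤ K / 2 * ‖y - x‖ ^ 2 := by
  set z := midpoint ℝ x y
  have hz : z ∈ closedBall z (‖y - x‖ / 2) := mem_closedBall_self (by positivity)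
  have hx : x ∈ closedBall z (‖y - x‖ / 2) := by
    rw [mem_closedBall, dist_left_midpoint, Real.norm_two, dist_eq_norm, norm_sub_rev,
      inv_mul_eq_div]
  have hy : y ∈ closedBall z (‖y - x‖ / 2) := by
    rw [mem_closedBall, dist_right_midpoint, Real.norm_two, dist_eq_norm, norm_sub_rev,
      inv_mul_eq_div]
  have hbound : ∀ u ∈ closedBall z (‖y - x‖ / 2),
      ‖fderiv ℝ f u - fderiv ℝ f z‖ ≤ K * (‖y - x‖ / 2) := fun u hu =>
    (hK.norm_sub_le hu hz).trans
      (mul_le_mul_of_nonneg_left (by simpa [dist_eq_norm] using hu) K.coe_nonneg)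
  calc ‖f y - f x - fderiv ℝ f z (y - x)‖ ≤ K * (‖y - x‖ / 2) * ‖y - x‖ :=
        (convex_closedBall z _).norm_image_sub_le_of_norm_fderiv_le' hf hbound hx hy
    _ = K / 2 * ‖y - x‖ ^ 2 := by ring

end MeanValue

theorem norm_gonzalezDiscreteGradient_sub_gradient {m : ℕ}
    (f : EuclideanSpace ℝ (Fin m) → ℝ) (x y : EuclideanSpace ℝ (Fin m)) :
    ‖gonzalezDiscreteGradient f x y - gradient f ((1/2 : ℝ) • (x + y))‖ =
      |f y - f x - fderiv ℝ f ((1/2 : ℝ) • (x + y)) (y - x)| / ‖y - x‖ := by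
  rw [gonzalezDiscreteGradient, add_sub_cancel_left, norm_smul, inner_gradient_left,
    Real.norm_eq_abs, abs_div, abs_of_nonneg (by positivity : (0 : ℝ) ≤ ‖y - x‖ ^ 2)]
  rcases eq_or_ne ‖y - x‖ 0 with h | h
  · simp [h]
  · field_simp

/-- **Consistency of the Gonzalez discrete gradient:**
for `f` twice continuously differentiable, `D̄f(x,y) = Df((x+y)/2) + O(‖y-x‖)`:
there are `C, δ > 0` with `‖D̄f(x,y) - Df((x+y)/2)‖ ≤ C‖y-x‖` whenever
`0 < ‖y-x‖ < δ`. -/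
theorem gonzalez_consistency {m : ℕ}
    (f : EuclideanSpace ℝ (Fin m) → ℝ) (hf : ContDiff ℝ 2 f)
    (x : EuclideanSpace ℝ (Fin m)) :
    ∃ C δ : ℝ, 0 < C ∧ 0 < δ ∧ ∀ y : EuclideanSpace ℝ (Fin m),
      0 < ‖y - x‖ → ‖y - x‖ < δ →
      ‖gonzalezDiscreteGradient f x y - gradient f ((1/2 : ℝ) • (x + y))‖
        ≤ C * ‖y - x‖ := by
  obtain ⟨K, t, ht, hK⟩ :=
    (hf.fderiv_right (m := 1) (by norm_num)).contDiffAt.exists_lipschitzOnWith (x := x)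
  obtain ⟨δ, hδ, hball⟩ := Metric.mem_nhds_iff.mp ht
  refine ⟨K / 2 + 1, δ, by positivity, hδ, fun y hy hyδ => ?_⟩
  have hsub : closedBall (midpoint ℝ x y) (‖y - x‖ / 2) ⊆ t :=
    (closedBall_midpoint_subset_closedBall_left x y).trans
      ((closedBall_subset_ball (by simpa [dist_eq_norm] using hyδ)).trans hball)
  have hnum := norm_sub_sub_fderiv_midpoint_le
    (fun u _ => hf.differentiable (by norm_num) u) (hK.mono hsub)
  rw [midpoint_eq_smul_add, invOf_eq_inv, inv_eq_one_div, Real.norm_eq_abs] at hnum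
  rw [norm_gonzalezDiscreteGradient_sub_gradient, div_le_iff₀ hy]
  calc |f y - f x - fderiv ℝ f ((1/2 : ℝ) • (x + y)) (y - x)| ≤ K / 2 * ‖y - x‖ ^ 2 := hnum
    _ ≤ (K / 2 + 1) * ‖y - x‖ * ‖y - x‖ := by nlinarith
end

section
/- The discrete Livens scheme exactly conserves the generalized energy: if (qⁿ, vⁿ, pⁿ) and (qⁿ⁺¹, vⁿ⁺¹, pⁿ⁺¹) satisfy qⁿ⁺¹ − qⁿ = h v^{n+1/2}, pⁿ⁺¹ − pⁿ = h D̄₁L − h Σₖ λₖ D̄gₖ, p^{n+1/2} = D̄₂L, g(qⁿ) = g(qⁿ⁺¹) = 0, where the discrete derivatives satisfy the directionality conditions D̄₁L·Δq + D̄₂L·Δv = L(qⁿ⁺¹,vⁿ⁺¹) − L(qⁿ,vⁿ) and D̄gₖ·Δq = gₖ(qⁿ⁺¹) − gₖ(qⁿ), then pⁿ⁺¹·vⁿ⁺¹ − L(qⁿ⁺¹,vⁿ⁺¹) = pⁿ·vⁿ − L(qⁿ,vⁿ). -/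
open scoped RealInnerProductSpace

/-!
The discrete product rule `Δ⟪p, v⟫ = ⟪p̄, Δv⟫ + ⟪Δp, v̄⟫` (bars are midpoints) turns the change of
the energy into `⟪D̄₂L, Δv⟫ + ⟪Δp, v̄⟫ - ΔL`. Pairing the momentum equation with `v̄` and using
`Δq = h v̄` gives `⟪Δp, v̄⟫ = ⟪D̄₁L, Δq⟫ - Σₖ λₖ ⟪D̄gₖ, Δq⟫`; the constraint forces do no work because
`⟪D̄gₖ, Δq⟫ = gₖ(qⁿ⁺¹) - gₖ(qⁿ) = 0`, and what is left vanishes by the directionality condition for `L`.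
-/

section DiscreteCalculus

variable {E : Type*} [NormedAddCommGroup E] [InnerProductSpace ℝ E]

theorem inner_sub_inner_eq_inner_midpoint (p₀ p₁ v₀ v₁ : E) :
    ⟪p₁, v₁⟫ - ⟪p₀, v₀⟫ =
      ⟪(1 / 2 : ℝ) • (p₀ + p₁), v₁ - v₀⟫ + ⟪p₁ - p₀, (1 / 2 : ℝ) • (v₀ + v₁)⟫ := by
  simp only [inner_sub_left, inner_sub_right, inner_add_left, inner_add_right,
    real_inner_smul_left, real_inner_smul_right]
  ring

theorem inner_sum_smul_eq_zero {ι : Type*} (s : Finset ι) (c : ι → ℝ) (u : ι → E) {x : E}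
    (hu : ∀ i ∈ s, ⟪u i, x⟫ = 0) : ⟪∑ i ∈ s, c i • u i, x⟫ = 0 := by
  rw [sum_inner]
  exact Finset.sum_eq_zero fun i hi => by rw [real_inner_smul_left, hu i hi, mul_zero]

theorem inner_sub_midpoint_eq_of_step {q₀ q₁ v₀ v₁ p₀ p₁ F G : E} {h : ℝ}
    (hq : q₁ - q₀ = h • ((1 / 2 : ℝ) • (v₀ + v₁))) (hp : p₁ - p₀ = h • F - h • G) :
    ⟪p₁ - p₀, (1 / 2 : ℝ) • (v₀ + v₁)⟫ = ⟪F, q₁ - q₀⟫ - ⟪G, q₁ - q₀⟫ := by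
  rw [hp, hq]
  simp only [inner_sub_left, real_inner_smul_left, real_inner_smul_right]
  ring

end DiscreteCalculus

theorem discrete_livens_energy_conservation_general {d m : ℕ}
    (L : EuclideanSpace ℝ (Fin d) → EuclideanSpace ℝ (Fin d) → ℝ)
    (g : EuclideanSpace ℝ (Fin d) → EuclideanSpace ℝ (Fin m))
    (h : ℝ)
    (qn qn1 vn vn1 pn pn1 D1L D2L : EuclideanSpace ℝ (Fin d))
    (Dg : Fin m → EuclideanSpace ℝ (Fin d)) (lam : Fin m → ℝ)
    (heq1 : qn1 - qn = h • ((1/2 : ℝ) • (vn + vn1)))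
    (heq2 : pn1 - pn = h • D1L - h • ∑ k : Fin m, lam k • Dg k)
    (heq3 : (1/2 : ℝ) • (pn + pn1) = D2L)
    (heq4 : g qn1 = 0) (heq5 : g qn = 0)
    (hdirL : ⟪D1L, qn1 - qn⟫ + ⟪D2L, vn1 - vn⟫ = L qn1 vn1 - L qn vn)
    (hdirg : ∀ k : Fin m, ⟪Dg k, qn1 - qn⟫ = g qn1 k - g qn k) :
    ⟪pn1, vn1⟫ - L qn1 vn1 = ⟪pn, vn⟫ - L qn vn := by
  have constraint_work : ⟪∑ k : Fin m, lam k • Dg k, qn1 - qn⟫ = 0 :=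
    inner_sum_smul_eq_zero _ lam Dg fun k _ => by simp [hdirg k, heq4, heq5]
  have power := inner_sub_midpoint_eq_of_step heq1 heq2
  have product := inner_sub_inner_eq_inner_midpoint pn pn1 vn vn1
  rw [heq3, power, constraint_work] at product
  linarith

/-- **Discrete energy conservation of the constrained discrete Livens scheme.**
If `(qⁿ,vⁿ,pⁿ)` and `(qⁿ⁺¹,vⁿ⁺¹,pⁿ⁺¹)` satisfy the discrete Livens equations
`qⁿ⁺¹ - qⁿ = h v^{n+1/2}`, `pⁿ⁺¹ - pⁿ = h D̄₁L - h Σₖ λₖ D̄gₖ`, `p^{n+1/2} = D̄₂L`,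
`g(qⁿ) = g(qⁿ⁺¹) = 0`, with discrete derivatives satisfying the directionality
conditions, then the discrete generalized energy `pⁿ·vⁿ - L(qⁿ,vⁿ)` is conserved. -/
theorem discrete_livens_energy_conservation {d m : ℕ}
    (L : EuclideanSpace ℝ (Fin d) → EuclideanSpace ℝ (Fin d) → ℝ)
    (g : EuclideanSpace ℝ (Fin d) → EuclideanSpace ℝ (Fin m))
    (h : ℝ) (hh : 0 < h)
    (qn qn1 vn vn1 pn pn1 D1L D2L : EuclideanSpace ℝ (Fin d))
    (Dg : Fin m → EuclideanSpace ℝ (Fin d)) (lam : Fin m → ℝ)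
    (heq1 : qn1 - qn = h • ((1/2 : ℝ) • (vn + vn1)))
    (heq2 : pn1 - pn = h • D1L - h • ∑ k : Fin m, lam k • Dg k)
    (heq3 : (1/2 : ℝ) • (pn + pn1) = D2L)
    (heq4 : g qn1 = 0) (heq5 : g qn = 0)
    (hdirL : ⟪D1L, qn1 - qn⟫ + ⟪D2L, vn1 - vn⟫ = L qn1 vn1 - L qn vn)
    (hdirg : ∀ k : Fin m, ⟪Dg k, qn1 - qn⟫ = g qn1 k - g qn k) :
    ⟪pn1, vn1⟫ - L qn1 vn1 = ⟪pn, vn⟫ - L qn vn :=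
  discrete_livens_energy_conservation_general L g h qn qn1 vn vn1 pn pn1 D1L D2L Dg lam heq1 heq2
    heq3 heq4 heq5 hdirL hdirg
end

section
/- For the unconstrained discrete Livens scheme (no constraint terms): if qⁿ⁺¹ − qⁿ = h(vⁿ+vⁿ⁺¹)/2, pⁿ⁺¹ − pⁿ = h D̄₁L, (pⁿ+pⁿ⁺¹)/2 = D̄₂L, and the partitioned directionality condition D̄₁L·(qⁿ⁺¹−qⁿ) + D̄₂L·(vⁿ⁺¹−vⁿ) = L(qⁿ⁺¹,vⁿ⁺¹) − L(qⁿ,vⁿ) holds, then the discrete generalized energy Eⁿ = pⁿ·vⁿ − L(qⁿ,vⁿ) satisfies Eⁿ⁺¹ = Eⁿ. -/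
/-!
The increment of `⟪p, v⟫` over a step obeys a discrete product rule: it equals
`⟪Δp, mean v⟫ + ⟪mean p, Δv⟫`. The scheme's equations rewrite the left side of the
directionality condition into exactly this expression, so the increments of `⟪p, v⟫` and
of `L(q, v)` coincide.
-/

open scoped RealInnerProductSpace

theorem inner_sub_inner_eq_midpoint {E : Type*} [NormedAddCommGroup E] [InnerProductSpace ℝ E]
    (p₀ p₁ v₀ v₁ : E) :
    ⟪p₁, v₁⟫ - ⟪p₀, v₀⟫ =
      ⟪p₁ - p₀, (1/2 : ℝ) • (v₀ + v₁)⟫ + ⟪(1/2 : ℝ) • (p₀ + p₁), v₁ - v₀⟫ := by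
  simp only [inner_sub_left, inner_sub_right, inner_add_left, inner_add_right,
    real_inner_smul_left, real_inner_smul_right]
  ring

theorem discrete_livens_energy_conservation_unconstrained_general {d : ℕ}
    (L : EuclideanSpace ℝ (Fin d) → EuclideanSpace ℝ (Fin d) → ℝ)
    (h : ℝ)
    (qn qn1 vn vn1 pn pn1 D1L D2L : EuclideanSpace ℝ (Fin d))
    (heq1 : qn1 - qn = h • ((1/2 : ℝ) • (vn + vn1)))
    (heq2 : pn1 - pn = h • D1L)
    (heq3 : (1/2 : ℝ) • (pn + pn1) = D2L)
    (hdirL : ⟪D1L, qn1 - qn⟫ + ⟪D2L, vn1 - vn⟫ = L qn1 vn1 - L qn vn) :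
    ⟪pn1, vn1⟫ - L qn1 vn1 = ⟪pn, vn⟫ - L qn vn := by
  have hD1L : ⟪D1L, qn1 - qn⟫ = ⟪pn1 - pn, (1/2 : ℝ) • (vn + vn1)⟫ := by
    rw [heq1, heq2, real_inner_smul_right, real_inner_smul_left]
  rw [hD1L, ← heq3, ← inner_sub_inner_eq_midpoint] at hdirL
  linarith

/-- **Discrete energy conservation of the unconstrained discrete Livens scheme.**
If `qⁿ⁺¹ - qⁿ = h(vⁿ+vⁿ⁺¹)/2`, `pⁿ⁺¹ - pⁿ = h D̄₁L`, `(pⁿ+pⁿ⁺¹)/2 = D̄₂L` and the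
partitioned directionality condition holds, then the discrete generalized energy
`Eⁿ = pⁿ·vⁿ - L(qⁿ,vⁿ)` satisfies `Eⁿ⁺¹ = Eⁿ`. -/
theorem discrete_livens_energy_conservation_unconstrained {d : ℕ}
    (L : EuclideanSpace ℝ (Fin d) → EuclideanSpace ℝ (Fin d) → ℝ)
    (h : ℝ) (hh : 0 < h)
    (qn qn1 vn vn1 pn pn1 D1L D2L : EuclideanSpace ℝ (Fin d))
    (heq1 : qn1 - qn = h • ((1/2 : ℝ) • (vn + vn1)))
    (heq2 : pn1 - pn = h • D1L)
    (heq3 : (1/2 : ℝ) • (pn + pn1) = D2L)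
    (hdirL : ⟪D1L, qn1 - qn⟫ + ⟪D2L, vn1 - vn⟫ = L qn1 vn1 - L qn vn) :
    ⟪pn1, vn1⟫ - L qn1 vn1 = ⟪pn, vn⟫ - L qn vn :=
  discrete_livens_energy_conservation_unconstrained_general L h qn qn1 vn vn1 pn pn1 D1L D2L heq1
    heq2 heq3 hdirL
end
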